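/- Let G be a strong digraph on a finite vertex type V with diameter at most 2, i.e., dist(u,v) ≤ 2 for all vertices u, v. Suppose there exist pairwise distinct vertices u, v, w such that (u,v), (u,w), (v,w), (w,u) and (w,v) are arcs of G, while (v,u) is not an arc of G. Then the second distance ideal I_2(G) is the unit ideal of ℤ[x_v : v ∈ V]. -/
import Mathlib

open MvPolynomial

/-- The ideal generated by the determinants of all `k × k` submatrices of a square
matrix `M` (choices of `k` rows and `k` columns). -/
def minorsIdeal {R : Type*} [CommRing R] {m : Type*} (M : Matrix m m R) (k : ℕ) : Ideal R :=
  Ideal.span { p | ∃ (r c : Fin k → m), Function.Injective r ∧ Function.Injective c ∧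
    p = (M.submatrix r c).det }

/-- A directed walk of length `k` from `u` to `v` in the digraph with arc relation `A`. -/
def IsWalk {V : Type*} (A : V → V → Prop) (k : ℕ) (u v : V) : Prop :=
  ∃ f : Fin (k + 1) → V, f 0 = u ∧ f (Fin.last k) = v ∧
    ∀ i : Fin k, A (f i.castSucc) (f i.succ)

/-- The distance from `u` to `v`: the minimum length of a directed walk from `u` to `v`. -/
noncomputable def ddist {V : Type*} (A : V → V → Prop) (u v : V) : ℕ :=
  sInf {k | IsWalk A k u v}

/-- The matrix `D_X(G)`: variable `x_v` at the `(v,v)` entry, and the constant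
`dist(u,v)` at the `(u,v)` entry for `u ≠ v`. -/
noncomputable def distDX {V : Type*} [DecidableEq V] (A : V → V → Prop) :
    Matrix V V (MvPolynomial V ℤ) :=
  Matrix.of fun u v => if u = v then X u else C (ddist A u v : ℤ)

lemma walk_zero {V : Type*} {A : V → V → Prop} {a b : V} (h : IsWalk A 0 a b) : a = b := by
  obtain ⟨f, h0, hl, _⟩ := h
  rw [← h0, ← hl]; rfl

lemma walk_one_of_arc {V : Type*} {A : V → V → Prop} {a b : V} (h : A a b) : IsWalk A 1 a b := by
  refine ⟨![a, b], rfl, rfl, ?_⟩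
  intro i
  fin_cases i
  simpa using h

lemma arc_of_walk_one {V : Type*} {A : V → V → Prop} {a b : V} (h : IsWalk A 1 a b) : A a b := by
  obtain ⟨f, h0, hl, harc⟩ := h
  have hl' : f 1 = b := hl
  have := harc 0
  simpa [h0, hl'] using this

lemma ddist_eq_one {V : Type*} {A : V → V → Prop} {a b : V} (hne : a ≠ b) (h : A a b) :
    ddist A a b = 1 := by
  have h1 : (1 : ℕ) ∈ {k | IsWalk A k a b} := walk_one_of_arc h
  have hle : ddist A a b ≤ 1 := Nat.sInf_le h1
  have hmem : ddist A a b ∈ {k | IsWalk A k a b} := Nat.sInf_mem ⟨1, h1⟩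
  interval_cases h' : ddist A a b
  · exact absurd (walk_zero hmem) hne
  · rfl

lemma ddist_eq_two {V : Type*} {A : V → V → Prop} {a b : V} (hne : a ≠ b) (h : ¬ A a b)
    (hs : ∃ k, IsWalk A k a b) (hd : ddist A a b ≤ 2) : ddist A a b = 2 := by
  obtain ⟨k, hk⟩ := hs
  have hmem : ddist A a b ∈ {k | IsWalk A k a b} := Nat.sInf_mem ⟨k, hk⟩
  interval_cases h' : ddist A a b
  · exact absurd (walk_zero hmem) hne
  · exact absurd (arc_of_walk_one hmem) h
  · rfl

lemma inj_pair {V : Type*} {a b : V} (h : a ≠ b) : Function.Injective ![a, b] := by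
  intro i j hij
  fin_cases i <;> fin_cases j <;> simp_all

/-- Pattern F₂: a strong digraph of diameter at most 2 containing the pattern `F₂`
has trivial second distance ideal. -/
theorem second_ideal_trivial_of_pattern_F2 {V : Type*} [Fintype V] [DecidableEq V]
    (A : V → V → Prop) (hirr : Irreflexive A)
    (hstrong : ∀ u v : V, ∃ k, IsWalk A k u v)
    (hdiam : ∀ u v : V, ddist A u v ≤ 2)
    (u v w : V)
    (huv : u ≠ v) (huw : u ≠ w) (hvw : v ≠ w)
    (h1 : A u v) (h2 : A u w) (h3 : A v w) (h4 : A w u) (h5 : A w v)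
    (h6 : ¬ A v u) :
    minorsIdeal (distDX A) 2 = ⊤ := by
  have duw : ddist A u w = 1 := ddist_eq_one huw h2
  have duv : ddist A u v = 1 := ddist_eq_one huv h1
  have dvw : ddist A v w = 1 := ddist_eq_one hvw h3
  have dwu : ddist A w u = 1 := ddist_eq_one huw.symm h4
  have dwv : ddist A w v = 1 := ddist_eq_one hvw.symm h5
  have dvu : ddist A v u = 2 := ddist_eq_two huv.symm h6 (hstrong v u) (hdiam v u)
  -- minor 1: rows ![u,v], cols ![w,v] : det = x_v - 1
  have m1 : ((distDX A).submatrix ![u, v] ![w, v]).det ∈ minorsIdeal (distDX A) 2 :=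
    Ideal.subset_span ⟨![u, v], ![w, v], inj_pair huv, inj_pair hvw.symm, rfl⟩
  have m2 : ((distDX A).submatrix ![w, v] ![u, v]).det ∈ minorsIdeal (distDX A) 2 :=
    Ideal.subset_span ⟨![w, v], ![u, v], inj_pair hvw.symm, inj_pair huv, rfl⟩
  have e1 : ((distDX A).submatrix ![u, v] ![w, v]).det = X v - 1 := by
    rw [Matrix.det_fin_two]
    simp [distDX, huw, huv, hvw, dvw, duw, duv]
  have e2 : ((distDX A).submatrix ![w, v] ![u, v]).det = X v - 2 := by
    rw [Matrix.det_fin_two]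
    simp [distDX, huw.symm, huv.symm, hvw.symm, dvu, dwu, dwv]
  rw [e1] at m1; rw [e2] at m2
  have : (1 : MvPolynomial V ℤ) ∈ minorsIdeal (distDX A) 2 := by
    have hd := Ideal.sub_mem _ m1 m2
    have he : (X v - 1) - (X v - 2) = (1 : MvPolynomial V ℤ) := by ring
    rwa [he] at hd
  exact Ideal.eq_top_of_isUnit_mem _ this isUnit_one
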